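/- For every integer n ≥ 3, the characteristic polynomial of the super compacted matrix SC_n equals Q_n(x) = x^n − 2(n−1)·Σ_{j=1}^{n−1} x^j + 1. -/
import Mathlib


/-- Entry `(i+1, j+1)` of the super compacted matrix `SC_n` of rank `n`
(zero-indexed `i, j ∈ {0, …, n-1}`). -/
def SCfun (n i j : ℕ) : ℝ :=
  if i + 3 ≤ n ∧ j = i + 1 then 1
  else if i = n - 1 then 1
  else if i = n - 3 ∧ j = n - 1 then 2
  else if i = n - 2 ∧ j + 2 ≤ n then 2 * (n : ℝ) - 3
  else if i = n - 2 ∧ j = n - 1 then 2 * (n : ℝ) - 4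
  else 0

/-- The super compacted matrix `SC_n` of rank `n`, of size `n × n`. -/
def SCmat (n : ℕ) : Matrix (Fin n) (Fin n) ℝ :=
  Matrix.of fun i j => SCfun n i.val j.val

open Polynomial in
/-- The polynomial `Q_n(x) = x^n − 2(n−1)·Σ_{j=1}^{n−1} x^j + 1`. -/
noncomputable def Qpoly (n : ℕ) : Polynomial ℝ :=
  X ^ n - C (2 * ((n : ℝ) - 1)) * (∑ j ∈ Finset.Icc 1 (n - 1), X ^ j) + 1

namespace SCaux
open Polynomial Finset

noncomputable def S (t : ℕ) : ℝ[X] := ∑ k ∈ Finset.range t, X ^ k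

lemma S_succ (t : ℕ) : S (t+1) = S t + X ^ t := Finset.sum_range_succ _ t

lemma X_mul_S (t : ℕ) : X * S t + 1 = S t + X ^ t := by
  induction t with
  | zero => simp [S]
  | succ t ih =>
    rw [S_succ, mul_add, add_right_comm, ih]
    ring

noncomputable def w (m j : ℕ) : ℝ[X] :=
  if j ≤ m then (2 * X - C (2 * (m:ℝ) + 4)) * X ^ j
  else if j = m + 1 then C (4 * (m:ℝ) + 6) * S (m+2) - C (2 * (m:ℝ) + 4) * X ^ (m+1)
  else X ^ (m+2) - C (2 * (m:ℝ) + 3) * S (m+2)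

lemma w_small (m j : ℕ) (h : j ≤ m) : w m j = (2 * X - C (2 * (m:ℝ) + 4)) * X ^ j := if_pos h

lemma w_m1 (m : ℕ) : w m (m+1) = C (4 * (m:ℝ) + 6) * S (m+2) - C (2 * (m:ℝ) + 4) * X ^ (m+1) := by
  rw [w, if_neg (by omega), if_pos rfl]

lemma w_m2 (m : ℕ) : w m (m+2) = X ^ (m+2) - C (2 * (m:ℝ) + 3) * S (m+2) := by
  rw [w, if_neg (by omega), if_neg (by omega)]

noncomputable def uu (m i j : ℕ) : ℝ[X] :=
  if j = m + 2 then w m i else if i ≤ j then X ^ i else 0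

lemma uu_last (m i : ℕ) : uu m i (m+2) = w m i := if_pos rfl

lemma uu_le (m i j : ℕ) (hj : j ≠ m + 2) (hij : i ≤ j) : uu m i j = X ^ i := by
  rw [uu, if_neg hj, if_pos hij]

lemma uu_gt (m i j : ℕ) (hj : j ≠ m + 2) (hij : ¬ i ≤ j) : uu m i j = 0 := by
  rw [uu, if_neg hj, if_neg hij]

noncomputable def Umat (m : ℕ) : Matrix (Fin (m+3)) (Fin (m+3)) ℝ[X] :=
  Matrix.of fun i j => uu m i.val j.val

-- row forms of SCfun with n = m+3
lemma row_small (m i k : ℕ) (hi : i < m) :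
    SCfun (m+3) i k = if k = i + 1 then 1 else 0 := by
  simp only [SCfun, show m+3-1 = m+2 from rfl, show m+3-2 = m+1 from rfl,
    show m+3-3 = m from rfl]
  have h1 : i + 3 ≤ m + 3 := by omega
  have h2 : i ≠ m + 2 := by omega
  have h3 : i ≠ m := by omega
  have h4 : i ≠ m + 1 := by omega
  simp [h1, h2, h3, h4]

lemma row_m (m k : ℕ) :
    SCfun (m+3) m k = (if k = m + 1 then 1 else 0) + (if k = m + 2 then 2 else 0) := by
  simp only [SCfun, show m+3-1 = m+2 from rfl, show m+3-2 = m+1 from rfl,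
    show m+3-3 = m from rfl]
  have h1 : m + 3 ≤ m + 3 := le_refl _
  have h2 : m ≠ m + 2 := by omega
  have h4 : m ≠ m + 1 := by omega
  rcases eq_or_ne k (m+1) with rfl | hk1
  · simp [h1, h2, h4]
  · rcases eq_or_ne k (m+2) with rfl | hk2
    · simp [h1, h2, h4, hk1]
    · simp [h1, h2, h4, hk1, hk2]

lemma row_m1 (m k : ℕ) (hk : k < m + 3) :
    SCfun (m+3) (m+1) k = (if k ≤ m + 1 then 2 * (m:ℝ) + 3 else 0)
      + (if k = m + 2 then 2 * (m:ℝ) + 2 else 0) := by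
  simp only [SCfun, show m+3-1 = m+2 from rfl, show m+3-2 = m+1 from rfl,
    show m+3-3 = m from rfl]
  have h1 : ¬(m + 1 + 3 ≤ m + 3) := by omega
  have h2 : m + 1 ≠ m + 2 := by omega
  have h3 : m + 1 ≠ m := by omega
  rcases le_or_gt k (m+1) with hk1 | hk1
  · have : k + 2 ≤ m + 3 := by omega
    have hk2 : k ≠ m + 2 := by omega
    simp [h1, h2, h3, this, hk1, hk2]
    ring
  · have hk2 : k = m + 2 := by omega
    subst hk2
    have : ¬(m + 2 + 2 ≤ m + 3) := by omega
    simp [h1, h2, h3, this, hk1.not_ge]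
    ring

lemma row_m2 (m k : ℕ) : SCfun (m+3) (m+2) k = 1 := by
  simp only [SCfun, show m+3-1 = m+2 from rfl]
  have h1 : ¬(m + 2 + 3 ≤ m + 3) := by omega
  simp [h1]

-- the entry of the product
lemma entry (m : ℕ) (i j : Fin (m+3)) :
    (Matrix.charmatrix (SCmat (m+3)) * Umat m) i j
      = X * uu m i.val j.val
        - ∑ k ∈ Finset.range (m+3), C (SCfun (m+3) i.val k) * uu m k j.val := by
  rw [Matrix.mul_apply]
  have key : ∀ k : Fin (m+3), Matrix.charmatrix (SCmat (m+3)) i k * Umat m k j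
      = (if i = k then X * uu m k.val j.val else 0)
        - C (SCfun (m+3) i.val k.val) * uu m k.val j.val := by
    intro k
    rcases eq_or_ne i k with rfl | h
    · rw [Matrix.charmatrix_apply_eq]
      simp only [if_pos rfl]
      show (X - C (SCmat (m+3) i i)) * Umat m i j = _
      rw [sub_mul]
      rfl
    · rw [Matrix.charmatrix_apply_ne _ _ _ h, if_neg h]
      show -C (SCmat (m+3) i k) * Umat m k j = _
      rw [neg_mul, zero_sub]
      rfl
  rw [Finset.sum_congr rfl fun k _ => key k, Finset.sum_sub_distrib]
  congr 1
  · rw [Finset.sum_ite_eq, if_pos (Finset.mem_univ i)]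
  · exact Fin.sum_univ_eq_sum_range (fun k => C (SCfun (m+3) i.val k) * uu m k j.val) (m+3)

-- helper: truncating sums with an upper-bound indicator
lemma sum_trunc (t s : ℕ) (hts : t + 1 ≤ s) (f : ℕ → ℝ[X]) :
    ∑ k ∈ Finset.range s, (if k ≤ t then f k else 0) = ∑ k ∈ Finset.range (t+1), f k := by
  have h1 : Finset.range (t+1) ⊆ Finset.range s := Finset.range_subset_range.mpr hts
  rw [← Finset.sum_subset h1
      (fun x hx hnx => by rw [if_neg (by simp at hx hnx ⊢; omega)])]
  exact Finset.sum_congr rfl fun k hk => by rw [if_pos (by simp at hk; omega)]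

-- row sums
lemma rowsum_small (m i j : ℕ) (hi : i < m) :
    ∑ k ∈ Finset.range (m+3), C (SCfun (m+3) i k) * uu m k j = uu m (i+1) j := by
  rw [Finset.sum_congr rfl fun k _ => by rw [row_small m i k hi]]
  simp only [apply_ite C, map_one, map_zero, ite_mul, one_mul, zero_mul]
  rw [Finset.sum_ite_eq' (Finset.range (m+3)) (i+1) (fun k => uu m k j),
    if_pos (by simp; omega)]

lemma rowsum_m (m j : ℕ) :
    ∑ k ∈ Finset.range (m+3), C (SCfun (m+3) m k) * uu m k j
      = uu m (m+1) j + 2 * uu m (m+2) j := by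
  rw [Finset.sum_congr rfl fun k _ => by rw [row_m m k]]
  simp only [map_add, apply_ite C, map_one, map_zero, map_ofNat, add_mul, ite_mul, one_mul,
    zero_mul]
  rw [Finset.sum_add_distrib,
    Finset.sum_ite_eq' (Finset.range (m+3)) (m+1) (fun k => uu m k j),
    Finset.sum_ite_eq' (Finset.range (m+3)) (m+2) (fun k => 2 * uu m k j),
    if_pos (by simp), if_pos (by simp)]

lemma term_m1 (m k j : ℕ) (hk : k < m + 3) :
    C (SCfun (m+3) (m+1) k) * uu m k j
      = (if k ≤ m + 1 then C (2 * (m:ℝ) + 3) * uu m k j else 0)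
        + (if k = m + 2 then C (2 * (m:ℝ) + 2) * uu m k j else 0) := by
  rw [row_m1 m k hk, map_add, apply_ite C, apply_ite C, map_zero, add_mul, ite_mul, ite_mul,
    zero_mul]

lemma rowsum_m1 (m j : ℕ) :
    ∑ k ∈ Finset.range (m+3), C (SCfun (m+3) (m+1) k) * uu m k j
      = C (2 * (m:ℝ) + 3) * (∑ k ∈ Finset.range (m+2), uu m k j)
        + C (2 * (m:ℝ) + 2) * uu m (m+2) j := by
  rw [Finset.sum_congr rfl fun k hk => term_m1 m k j (Finset.mem_range.mp hk)]
  rw [Finset.sum_add_distrib,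
    Finset.sum_ite_eq' (Finset.range (m+3)) (m+2) (fun k => C (2 * (m:ℝ) + 2) * uu m k j),
    if_pos (by simp),
    sum_trunc (m+1) (m+3) (by omega) (fun k => C (2 * (m:ℝ) + 3) * uu m k j),
    ← Finset.mul_sum]

lemma rowsum_m2 (m j : ℕ) :
    ∑ k ∈ Finset.range (m+3), C (SCfun (m+3) (m+2) k) * uu m k j
      = ∑ k ∈ Finset.range (m+3), uu m k j := by
  exact Finset.sum_congr rfl fun k _ => by rw [row_m2, map_one, one_mul]


lemma sum_uu (m j t : ℕ) (hj : j ≤ m + 1) (ht : j + 1 ≤ t) :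
    ∑ k ∈ Finset.range t, uu m k j = S (j+1) := by
  have h : ∀ k, uu m k j = if k ≤ j then X ^ k else 0 := fun k => by
    rcases le_or_gt k j with h | h
    · rw [uu_le m k j (by omega) h, if_pos h]
    · rw [uu_gt m k j (by omega) (by omega), if_neg (by omega)]
  rw [Finset.sum_congr rfl fun k _ => h k, sum_trunc j t ht, S]

lemma sum_w (m : ℕ) :
    ∑ k ∈ Finset.range (m+1), w m k = (2 * X - C (2 * (m:ℝ) + 4)) * S (m+1) := by
  rw [S, Finset.mul_sum]
  exact Finset.sum_congr rfl fun k hk => w_small m k (by simp at hk; omega)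

lemma Ezero (m i j : ℕ) (hij : i < j) (hj : j < m + 3) :
    X * uu m i j - ∑ k ∈ Finset.range (m+3), C (SCfun (m+3) i k) * uu m k j = 0 := by
  rcases eq_or_ne j (m+2) with rfl | hj2
  · rw [uu_last]
    have hs : S (m+1) = S (m+2) - X ^ (m+1) := by
      have h2 : S (m+2) = S (m+1) + X ^ (m+1) := S_succ (m+1)
      rw [h2]; ring
    rcases lt_trichotomy i m with him | him2 | him
    · rw [rowsum_small m i (m+2) him, uu_last, w_small m i (le_of_lt him),
        w_small m (i+1) him]
      ring
    · rw [him2, rowsum_m, uu_last, uu_last, w_small m m le_rfl, w_m1, w_m2]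
      simp only [map_add, map_mul, map_ofNat]
      ring
    · have : i = m + 1 := by omega
      subst this
      rw [rowsum_m1]
      simp only [uu_last]
      rw [Finset.sum_range_succ, sum_w, w_m1, w_m2, hs]
      simp only [map_add, map_mul, map_ofNat]
      ring
  · have hjm : j ≤ m + 1 := by omega
    rcases lt_trichotomy i m with him | him2 | him
    · rw [rowsum_small m i j him, uu_le m i j hj2 (by omega), uu_le m (i+1) j hj2 (by omega)]
      ring
    · subst him2
      have : j = i + 1 := by omega
      subst this
      rw [rowsum_m, uu_le i i (i+1) hj2 (by omega), uu_le i (i+1) (i+1) hj2 le_rfl,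
        uu_gt i (i+2) (i+1) hj2 (by omega)]
      ring
    · omega

lemma Ediag_small (m i : ℕ) (hi : i ≤ m) :
    X * uu m i i - ∑ k ∈ Finset.range (m+3), C (SCfun (m+3) i k) * uu m k i = X ^ (i+1) := by
  have hi2 : i ≠ m + 2 := by omega
  rcases lt_or_eq_of_le hi with him | him2
  · rw [rowsum_small m i i him, uu_le m i i hi2 le_rfl, uu_gt m (i+1) i hi2 (by omega),
      pow_succ]
    ring
  · subst him2
    rw [rowsum_m, uu_le i i i hi2 le_rfl, uu_gt i (i+1) i hi2 (by omega),
      uu_gt i (i+2) i hi2 (by omega), pow_succ]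
    ring

lemma Ediag_m1 (m : ℕ) :
    X * uu m (m+1) (m+1) - ∑ k ∈ Finset.range (m+3), C (SCfun (m+3) (m+1) k) * uu m k (m+1)
      = w m (m+2) := by
  rw [rowsum_m1, sum_uu m (m+1) (m+2) le_rfl le_rfl,
    uu_le m (m+1) (m+1) (by omega) le_rfl, uu_gt m (m+2) (m+1) (by omega) (by omega),
    w_m2, pow_succ]
  ring

lemma Ediag_m2 (m : ℕ) :
    X * uu m (m+2) (m+2) - ∑ k ∈ Finset.range (m+3), C (SCfun (m+3) (m+2) k) * uu m k (m+2)
      = Qpoly (m+3) := by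
  rw [rowsum_m2]
  simp only [uu_last]
  rw [Finset.sum_range_succ, Finset.sum_range_succ, sum_w, w_m1, w_m2]
  have hIcc : (∑ j ∈ Finset.Icc 1 (m+2), (X:ℝ[X]) ^ j) = X * S (m+2) := by
    rw [S, Finset.mul_sum, ← Finset.Ico_add_one_right_eq_Icc, Finset.sum_Ico_eq_sum_range]
    simp only [show m + 2 + 1 - 1 = m + 2 from rfl]
    exact Finset.sum_congr rfl fun k _ => by rw [← pow_succ', Nat.add_comm]
  have hcast : (2 * ((((m:ℕ)+3 : ℕ) : ℝ) - 1)) = 2 * (m:ℝ) + 4 := by push_cast; ring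
  have hs : S (m+1) = S (m+2) - X ^ (m+1) := by
    have h2 : S (m+2) = S (m+1) + X ^ (m+1) := S_succ (m+1)
    rw [h2]; ring
  rw [Qpoly, show m + 3 - 1 = m + 2 from rfl, hIcc, hcast, hs]
  simp only [map_add, map_mul, map_ofNat]
  linear_combination -X_mul_S (m+2)

lemma Umat_triangular (m : ℕ) : (Umat m).BlockTriangular id := by
  intro i j hij
  have h : (j:ℕ) < (i:ℕ) := hij
  have hi : (i:ℕ) < m + 3 := i.isLt
  exact uu_gt m i.val j.val (by omega) (by omega)

lemma detU (m : ℕ) :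
    (Umat m).det = (∏ i : Fin (m+2), (X:ℝ[X]) ^ (i:ℕ)) * w m (m+2) := by
  rw [Matrix.det_of_upperTriangular (Umat_triangular m), Fin.prod_univ_castSucc]
  congr 1
  · refine Finset.prod_congr rfl fun i _ => ?_
    show uu m (Fin.castSucc i).val (Fin.castSucc i).val = _
    simp only [Fin.coe_castSucc]
    exact uu_le m i.val i.val (by have := i.isLt; omega) le_rfl
  · exact uu_last m (m+2)

lemma detL (m : ℕ) :
    (Matrix.charmatrix (SCmat (m+3)) * Umat m).det
      = ((∏ i : Fin (m+1), (X:ℝ[X]) ^ ((i:ℕ)+1)) * w m (m+2)) * Qpoly (m+3) := by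
  have hLT : (Matrix.charmatrix (SCmat (m+3)) * Umat m).BlockTriangular OrderDual.toDual := by
    intro i j hij
    have h : (i:ℕ) < (j:ℕ) := hij
    rw [entry m i j, Ezero m i.val j.val h j.isLt]
  rw [Matrix.det_of_lowerTriangular _ hLT, Fin.prod_univ_castSucc, Fin.prod_univ_castSucc]
  congr 1
  congr 1
  · refine Finset.prod_congr rfl fun i _ => ?_
    rw [entry]
    simp only [Fin.coe_castSucc]
    exact Ediag_small m i.val (by have := i.isLt; omega)
  · rw [entry]
    simp only [Fin.coe_castSucc, Fin.val_last]
    exact Ediag_m1 m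
  · rw [entry]
    simp only [Fin.val_last]
    exact Ediag_m2 m

lemma wne (m : ℕ) : w m (m+2) ≠ 0 := by
  intro h
  have h2 : (w m (m+2)).coeff (m+2) = 1 := by
    rw [w_m2, Polynomial.coeff_sub, Polynomial.coeff_X_pow, if_pos rfl, Polynomial.coeff_C_mul,
      S, Polynomial.finset_sum_coeff,
      Finset.sum_eq_zero fun k hk => by
        rw [Polynomial.coeff_X_pow, if_neg (by simp at hk; omega)]]
    ring
  rw [h] at h2
  simp at h2

end SCaux

theorem stmt10 (n : ℕ) (hn : 3 ≤ n) :
    (SCmat n).charpoly = Qpoly n := by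
  obtain ⟨m, rfl⟩ : ∃ m, n = m + 3 := ⟨n - 3, by omega⟩
  open Polynomial SCaux in
  have key : (SCmat (m+3)).charpoly * (Umat m).det
      = (Matrix.charmatrix (SCmat (m+3)) * Umat m).det := (Matrix.det_mul _ _).symm
  have hprod : (∏ i : Fin (m+2), (X:ℝ[X]) ^ (i:ℕ))
      = ∏ i : Fin (m+1), (X:ℝ[X]) ^ ((i:ℕ)+1) := by
    rw [Finset.prod_pow_eq_pow_sum, Finset.prod_pow_eq_pow_sum]
    congr 1
    rw [Fin.sum_univ_eq_sum_range (fun i => i) (m+2),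
      Fin.sum_univ_eq_sum_range (fun i => i+1) (m+1),
      Finset.sum_range_succ' (fun i => i) (m+1)]
    simp
  rw [SCaux.detU, SCaux.detL, hprod] at key
  have hPW : (∏ i : Fin (m+1), (X:ℝ[X]) ^ ((i:ℕ)+1)) * SCaux.w m (m+2) ≠ 0 :=
    mul_ne_zero (Finset.prod_ne_zero_iff.mpr fun i _ => pow_ne_zero _ Polynomial.X_ne_zero)
      (SCaux.wne m)
  exact mul_right_cancel₀ hPW (key.trans (mul_comm _ _))
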